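/- arXiv:1308.0997 — 2 statements merged into one kernel-verified Lean document; each statement's English description precedes it below -/
import Mathlib

section
/- Let R be a commutative ring that is a ℚ-algebra and let a, b ∈ R. With f₁, f₂, f₄ as below, the identity a·b·(f₂′·f₁ − f₁′·f₂)·f₄ = f₁′ holds in the formal power series ring R[[x]]. -/
/-!
With `s = 2a`, `t = 2b`, the series `f₁` and `f₂` solve
`(4 - X²) f'' = (s + t + 1) X f' + s t f`, because their coefficients obey
`4 (n + 1) (n + 2) c (n + 2) = (n + s) (n + t) c n`; and `f₄` solves the same equation for
`(-s, -t)`. The Wronskian `W` of `f₁, f₂` satisfies `(4 - X²) W' = (s + t + 1) X W`, and from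
this one checks that both `f₁'` and `a b W f₄` solve the equation for `(s + 1, t + 1)`. Over a
ℚ-algebra the coefficient recursion determines a solution from its first two coefficients, which
are `0` and `a b` for both series.
-/

open PowerSeries

noncomputable def f₁ {R : Type*} [CommRing R] [Algebra ℚ R] (a b : R) : R⟦X⟧ :=
  PowerSeries.mk fun n =>
    if n % 2 = 0 then
      ((Nat.factorial n : ℚ))⁻¹ • ∏ r ∈ Finset.range (n / 2), ((a + (r : R)) * (b + (r : R)))
    else 0

noncomputable def f₂ {R : Type*} [CommRing R] [Algebra ℚ R] (a b : R) : R⟦X⟧ :=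
  PowerSeries.mk fun n =>
    if n % 2 = 1 then
      ((Nat.factorial n : ℚ))⁻¹ • ∏ r ∈ Finset.range (n / 2),
        ((a + (r : R) + algebraMap ℚ R (1/2)) * (b + (r : R) + algebraMap ℚ R (1/2)))
    else 0

noncomputable def f₃ {R : Type*} [CommRing R] [Algebra ℚ R] (a b : R) : R⟦X⟧ :=
  PowerSeries.mk fun n =>
    if n % 2 = 0 then
      ((Nat.factorial n : ℚ))⁻¹ • ∏ r ∈ Finset.range (n / 2), ((a - (r : R)) * (b - (r : R)))
    else 0

noncomputable def f₄ {R : Type*} [CommRing R] [Algebra ℚ R] (a b : R) : R⟦X⟧ :=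
  PowerSeries.mk fun n =>
    if n % 2 = 1 then
      ((Nat.factorial n : ℚ))⁻¹ • ∏ r ∈ Finset.range (n / 2),
        ((a - (r : R) - algebraMap ℚ R (1/2)) * (b - (r : R) - algebraMap ℚ R (1/2)))
    else 0

open Nat

section

variable {R : Type*} [CommRing R]

theorem coeff_X_mul_derivative (f : R⟦X⟧) (n : ℕ) :
    coeff n (X * d⁄dX R f) = n * coeff n f := by
  cases n with
  | zero => simp
  | succ n => rw [coeff_succ_X_mul, coeff_derivative, mul_comm]; push_cast; rfl

theorem coeff_X_sq_mul_derivative_derivative (f : R⟦X⟧) (n : ℕ) :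
    coeff n (X ^ 2 * d⁄dX R (d⁄dX R f)) = n * (n - 1) * coeff n f := by
  rcases n with _ | _ | n
  · simp
  · simp [coeff_X_pow_mul']
  · rw [coeff_X_pow_mul', if_pos (by omega), show n + 1 + 1 - 2 = n by omega, coeff_derivative,
      coeff_derivative]
    push_cast
    ring

theorem derivative_four_sub_X_sq : d⁄dX R (4 - X ^ 2 : R⟦X⟧) = -(2 * X) := by
  rw [map_sub, ← map_ofNat C 4, derivative_C, derivative_pow, derivative_X]
  ring

/-- The substitution `z = X² / 4` turns this into Gauss's hypergeometric equation with
parameters `(s / 2, t / 2; 1 / 2)`; the parameters are doubled so that the shifts by `1 / 2`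
occurring below become shifts by `1`. -/
def HypergeometricODE (s t : R) (f : R⟦X⟧) : Prop :=
  (4 - X ^ 2) * d⁄dX R (d⁄dX R f) = C (s + t + 1) * (X * d⁄dX R f) + C (s * t) * f

theorem hypergeometricODE_iff_coeff (s t : R) (f : R⟦X⟧) :
    HypergeometricODE s t f ↔ ∀ n : ℕ,
      4 * ((n : R) + 1) * (n + 2) * coeff (n + 2) f = (n + s) * (n + t) * coeff n f := by
  refine PowerSeries.ext_iff.trans (forall_congr' fun n ↦ ?_)
  rw [sub_mul, map_sub, map_add, ← map_ofNat C 4, coeff_C_mul, coeff_C_mul, coeff_C_mul,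
    coeff_X_sq_mul_derivative_derivative, coeff_X_mul_derivative, coeff_derivative,
    coeff_derivative]
  push_cast
  constructor <;> intro h <;> linear_combination h

theorem HypergeometricODE.derivative {s t : R} {f : R⟦X⟧} (hf : HypergeometricODE s t f) :
    HypergeometricODE (s + 1) (t + 1) (d⁄dX R f) := by
  have h := congrArg (d⁄dX R) hf
  simp only [Derivation.leibniz, smul_eq_mul, map_add, derivative_four_sub_X_sq, derivative_C,
    derivative_X] at h
  unfold HypergeometricODE
  simp only [map_add, map_mul, map_one] at h ⊢
  linear_combination h

noncomputable def wronskian (f g : R⟦X⟧) : R⟦X⟧ := d⁄dX R g * f - d⁄dX R f * g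

theorem HypergeometricODE.wronskian {s t : R} {f g : R⟦X⟧} (hf : HypergeometricODE s t f)
    (hg : HypergeometricODE s t g) :
    (4 - X ^ 2) * d⁄dX R (wronskian f g) = C (s + t + 1) * (X * wronskian f g) := by
  unfold HypergeometricODE at hf hg
  unfold _root_.wronskian
  simp only [map_sub, Derivation.leibniz, smul_eq_mul]
  linear_combination f * hg - g * hf

variable [Algebra ℚ R]

theorem isUnit_natCast_of_ne_zero {n : ℕ} (hn : n ≠ 0) : IsUnit (n : R) := by
  simpa using (IsUnit.mk0 (n : ℚ) (by exact_mod_cast hn)).map (algebraMap ℚ R)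

theorem HypergeometricODE.ext {s t : R} {f g : R⟦X⟧} (hf : HypergeometricODE s t f)
    (hg : HypergeometricODE s t g) (h₀ : coeff 0 f = coeff 0 g) (h₁ : coeff 1 f = coeff 1 g) :
    f = g := by
  rw [hypergeometricODE_iff_coeff] at hf hg
  ext n
  induction n using Nat.strong_induction_on with
  | _ n ih =>
    match n with
    | 0 => exact h₀
    | 1 => exact h₁
    | n + 2 =>
      have hu : IsUnit (4 * ((n : R) + 1) * (n + 2)) := by
        exact_mod_cast isUnit_natCast_of_ne_zero (R := R) (n := 4 * (n + 1) * (n + 2))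
          (by positivity)
      exact hu.mul_left_cancel (by rw [hf, hg, ih n (by omega)])

theorem HypergeometricODE.mul_left {s t : R} {w f : R⟦X⟧}
    (hw : (4 - X ^ 2) * d⁄dX R w = C (s + t + 1) * (X * w)) (hf : HypergeometricODE (-s) (-t) f) :
    HypergeometricODE (s + 1) (t + 1) (w * f) := by
  have hu : IsUnit (4 - X ^ 2 : R⟦X⟧) := by
    rw [isUnit_iff_constantCoeff, ← map_ofNat C 4]
    simpa using isUnit_natCast_of_ne_zero (R := R) (n := 4) (by norm_num)
  have hw' := congrArg (d⁄dX R) hw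
  simp only [Derivation.leibniz, smul_eq_mul, derivative_four_sub_X_sq, derivative_C,
    derivative_X] at hw'
  unfold HypergeometricODE at hf ⊢
  refine hu.mul_left_cancel ?_
  simp only [Derivation.leibniz, smul_eq_mul, map_add, map_mul, map_one, map_neg] at hw hw' hf ⊢
  linear_combination (4 - X ^ 2) * f * hw' + (4 - X ^ 2) * w * hf
    + 2 * (4 - X ^ 2) * d⁄dX R f * hw

theorem natCast_add_one_mul_factorial_inv (n : ℕ) :
    ((n : R) + 1) * (n + 2) * algebraMap ℚ R ((n + 2)! : ℚ)⁻¹ = algebraMap ℚ R (n ! : ℚ)⁻¹ := by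
  have h : ((n : ℚ) + 1) * (n + 2) * ((n + 2)! : ℚ)⁻¹ = (n ! : ℚ)⁻¹ := by
    rw [Nat.factorial_succ, Nat.factorial_succ]
    field_simp
    push_cast
    ring
  have := congrArg (algebraMap ℚ R) h
  rwa [map_mul, map_mul, map_add, map_add, map_natCast, map_one, map_ofNat] at this

/-- `f₁ a b`, `f₂ a b` and `f₄ a b` are definitionally of this form. -/
noncomputable def parityFactorialSeries (i : ℕ) (g : ℕ → R) : R⟦X⟧ :=
  PowerSeries.mk fun n =>
    if n % 2 = i then ((Nat.factorial n : ℚ))⁻¹ • ∏ r ∈ Finset.range (n / 2), g r else 0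

theorem hypergeometricODE_parityFactorialSeries {s t : R} {i : ℕ} (g : ℕ → R)
    (hg : ∀ k : ℕ, ((2 * k + i : ℕ) + s) * ((2 * k + i : ℕ) + t) = 4 * g k) :
    HypergeometricODE s t (parityFactorialSeries i g) := by
  rw [hypergeometricODE_iff_coeff]
  intro n
  simp only [parityFactorialSeries, coeff_mk, Nat.add_mod_right]
  split_ifs with hn
  · have hk : 2 * (n / 2) + i = n := hn ▸ Nat.div_add_mod n 2
    have hgn : ((n : R) + s) * (n + t) = 4 * g (n / 2) := by simpa [hk] using hg (n / 2)
    rw [show (n + 2) / 2 = n / 2 + 1 by omega, Finset.prod_range_succ, Algebra.smul_def,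
      Algebra.smul_def, hgn]
    linear_combination (4 * (∏ r ∈ Finset.range (n / 2), g r) * g (n / 2)) *
      natCast_add_one_mul_factorial_inv (R := R) n
  · simp

theorem algebraMap_inv_two_mul_two : algebraMap ℚ R 2⁻¹ * 2 = 1 := by
  rw [← map_ofNat (algebraMap ℚ R) 2, ← map_mul]
  norm_num

end

/-- Equation (23) of the Lemma of Appendix B: `a·b·(f₂′·f₁ − f₁′·f₂)·f₄ = f₁′` in `R⟦x⟧`. -/
theorem stmt1 {R : Type*} [CommRing R] [Algebra ℚ R] (a b : R) :
    C a * C b * (d⁄dX R (f₂ a b) * f₁ a b - d⁄dX R (f₁ a b) * f₂ a b) * f₄ a b =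
      d⁄dX R (f₁ a b) := by
  have hhalf := algebraMap_inv_two_mul_two (R := R)
  have h₁ : HypergeometricODE (2 * a) (2 * b) (f₁ a b) :=
    hypergeometricODE_parityFactorialSeries (i := 0) _ fun k ↦ by push_cast; ring
  have h₂ : HypergeometricODE (2 * a) (2 * b) (f₂ a b) :=
    hypergeometricODE_parityFactorialSeries (i := 1) _ fun k ↦ by
      rw [one_div]; push_cast
      linear_combination (-(2 * a + 2 * b + 4 * k + 2 * algebraMap ℚ R 2⁻¹ + 1)) * hhalf
  have h₄ : HypergeometricODE (-(2 * a)) (-(2 * b)) (f₄ a b) :=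
    hypergeometricODE_parityFactorialSeries (i := 1) _ fun k ↦ by
      rw [one_div]; push_cast
      linear_combination (2 * a + 2 * b - 4 * k - 2 * algebraMap ℚ R 2⁻¹ - 1) * hhalf
  have hW₀ : constantCoeff (wronskian (f₁ a b) (f₂ a b)) = 1 := by
    simp only [wronskian, map_sub, map_mul, ← coeff_zero_eq_constantCoeff_apply, coeff_derivative]
    simp [f₁, f₂]
  have hW : (4 - X ^ 2) * d⁄dX R (C a * C b * wronskian (f₁ a b) (f₂ a b)) =
      C (2 * a + 2 * b + 1) * (X * (C a * C b * wronskian (f₁ a b) (f₂ a b))) := by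
    have h := h₁.wronskian h₂
    simp only [Derivation.leibniz, derivative_C, smul_eq_mul, mul_zero, add_zero]
    linear_combination C a * C b * h
  have hf₁' : coeff 1 (d⁄dX R (f₁ a b)) = a * b := by
    simp [f₁, coeff_derivative, Algebra.smul_def, one_add_one_eq_two, mul_right_comm _ (a * b),
      hhalf]
  refine (HypergeometricODE.mul_left hW h₄).ext h₁.derivative ?_ ?_
  · simp [f₁, f₄, coeff_derivative]
  · simp [coeff_mul, Finset.Nat.sum_antidiagonal_succ, hW₀, f₄, hf₁']
end

section
/- Let R be a commutative ring that is a ℚ-algebra and let a, b ∈ R. Set g = f₂′, the formal derivative of f₂. Then g satisfies the formal differential equation (x²/4 − 1)·g″ + (3/4 + (a+b)/2)·x·g′ + (a + 1/2)·(b + 1/2)·g = 0 in R[[x]]. -/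
open PowerSeries

/-! Read coefficientwise, the equation for `g = f₂′` is the two-term recurrence
`(n+2)(n+1) gₙ₊₂ = (a + (n+1)/2)(b + (n+1)/2) gₙ`, because the polynomial
`n(n-1)/4 + (3/4 + (a+b)/2) n + (a+1/2)(b+1/2)` factors as `(a + (n+1)/2)(b + (n+1)/2)`.
Since `gₙ = (n+1) cₙ₊₁` for the coefficients `cₘ` of `f₂`, this is the recurrence
`(m+2)(m+1) cₘ₊₂ = (a + m/2)(b + m/2) cₘ`, which the product formula for `cₘ` gives for odd `m`
and which is trivial for even `m`. -/

open scoped Nat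

namespace PowerSeries

theorem coeff_X_mul_derivative {R : Type*} [CommSemiring R] (f : R⟦X⟧) (n : ℕ) :
    coeff n (X * d⁄dX R f) = n * coeff n f := by
  cases n with
  | zero => simp
  | succ n => rw [coeff_succ_X_mul, coeff_derivative, mul_comm, Nat.cast_succ]

section CommRing

variable {R : Type*} [CommRing R]

theorem coeff_X_sq_mul_derivative_derivative (f : R⟦X⟧) (n : ℕ) :
    coeff n (X ^ 2 * d⁄dX R (d⁄dX R f)) = n * (n - 1) * coeff n f := by
  rcases n with _ | _ | n
  · simp
  · simp [coeff_X_pow_mul']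
  · rw [show n + 1 + 1 = n + 2 from rfl, coeff_X_pow_mul, coeff_derivative, coeff_derivative]
    push_cast
    ring

noncomputable def secondOrderOperator (α β γ : R) (g : R⟦X⟧) : R⟦X⟧ :=
  (C α * X ^ 2 - 1) * d⁄dX R (d⁄dX R g) + C β * X * d⁄dX R g + C γ * g

theorem coeff_secondOrderOperator (α β γ : R) (g : R⟦X⟧) (n : ℕ) :
    coeff n (secondOrderOperator α β γ g) =
      (α * n * (n - 1) + β * n + γ) * coeff n g - (n + 2) * (n + 1) * coeff (n + 2) g := by
  simp only [secondOrderOperator, sub_mul, one_mul, mul_assoc, map_add, map_sub, coeff_C_mul,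
    coeff_X_sq_mul_derivative_derivative, coeff_X_mul_derivative, coeff_derivative]
  push_cast
  ring

end CommRing

end PowerSeries

section f₂

variable {R : Type*} [CommRing R] [Algebra ℚ R]

theorem algebraMap_inv_factorial_add_two_mul (n : ℕ) :
    algebraMap ℚ R ((n + 2)! : ℚ)⁻¹ * ((n + 2) * (n + 1)) = algebraMap ℚ R (n ! : ℚ)⁻¹ := by
  have h : ((n + 2)! : ℚ)⁻¹ * ((n + 2) * (n + 1)) = (n ! : ℚ)⁻¹ := by
    rw [Nat.factorial_succ, Nat.factorial_succ]
    push_cast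
    field_simp
    ring
  rw [← h, map_mul]
  simp [map_ofNat]

variable (a b : R)

theorem coeff_f₂_of_even {n : ℕ} (hn : Even n) : coeff n (f₂ a b) = 0 := by
  simp [f₂, Nat.even_iff.mp hn]

theorem coeff_f₂_two_mul_add_one (k : ℕ) :
    coeff (2 * k + 1) (f₂ a b) = ((2 * k + 1)! : ℚ)⁻¹ • ∏ r ∈ Finset.range k,
        ((a + (r : R) + algebraMap ℚ R (1/2)) * (b + (r : R) + algebraMap ℚ R (1/2))) := by
  simp [f₂, show (2 * k + 1) / 2 = k by omega]

theorem coeff_f₂_add_two (m : ℕ) :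
    ((m + 2) * (m + 1) : R) * coeff (m + 2) (f₂ a b) =
      (a + m * algebraMap ℚ R (1/2)) * (b + m * algebraMap ℚ R (1/2)) * coeff m (f₂ a b) := by
  rcases Nat.even_or_odd' m with ⟨k, rfl | rfl⟩
  · rw [coeff_f₂_of_even a b (n := 2 * k) ⟨k, by ring⟩,
      coeff_f₂_of_even a b (n := 2 * k + 2) ⟨k + 1, by ring⟩, mul_zero, mul_zero]
  · have factorial_step := algebraMap_inv_factorial_add_two_mul (R := R) (2 * k + 1)
    rw [show 2 * k + 1 + 2 = 2 * (k + 1) + 1 by ring] at factorial_step ⊢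
    rw [coeff_f₂_two_mul_add_one, coeff_f₂_two_mul_add_one, Finset.prod_range_succ,
      Algebra.smul_def, Algebra.smul_def]
    set h := algebraMap ℚ R (1/2)
    have two_h : 2 * h = 1 := by rw [← map_ofNat (algebraMap ℚ R) 2, ← map_mul]; norm_num
    have half_odd : ((2 * k + 1 : ℕ) : R) * h = k + h := by
      push_cast
      linear_combination k * two_h
    rw [half_odd]
    linear_combination (∏ r ∈ Finset.range k, ((a + (r : R) + h) * (b + (r : R) + h))) *
      ((a + k + h) * (b + k + h)) * factorial_step

end f₂

/-- `g = f₂′` satisfies `(x²/4 − 1)·g″ + (3/4 + (a+b)/2)·x·g′ + (a+1/2)(b+1/2)·g = 0`. -/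
theorem stmt4 {R : Type*} [CommRing R] [Algebra ℚ R] (a b : R) :
    ((1/4 : ℚ) • (PowerSeries.X : R⟦X⟧) ^ 2 - 1) * d⁄dX R (d⁄dX R (d⁄dX R (f₂ a b))) +
      ((3/4 : ℚ) • (1 : R⟦X⟧) + (1/2 : ℚ) • C (a + b)) * PowerSeries.X *
        d⁄dX R (d⁄dX R (f₂ a b)) +
      (C a + (1/2 : ℚ) • (1 : R⟦X⟧)) * (C b + (1/2 : ℚ) • (1 : R⟦X⟧)) *
        d⁄dX R (f₂ a b) = 0 := by
  set h := algebraMap ℚ R (1/2)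
  have quarter : algebraMap ℚ R (1/4) = h * h := by rw [← map_mul]; norm_num
  have three_quarters : algebraMap ℚ R (3/4) = 3 * (h * h) := by
    rw [← map_mul, ← map_ofNat (algebraMap ℚ R) 3, ← map_mul]; norm_num
  calc _ = secondOrderOperator (h * h) (3 * h * h + h * (a + b)) ((a + h) * (b + h))
        (d⁄dX R (f₂ a b)) := by
        simp only [secondOrderOperator, Algebra.smul_def, PowerSeries.algebraMap_apply, quarter,
          three_quarters, map_add, map_mul, map_ofNat, mul_one]
        ring
    _ = 0 := by
        ext n
        have recurrence := coeff_f₂_add_two a b (n + 1)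
        rw [coeff_secondOrderOperator, map_zero, coeff_derivative, coeff_derivative]
        push_cast at recurrence ⊢
        linear_combination (-(n + 1 : R)) * recurrence
end
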